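/- For every 1 ≤ r ≤ n, the r-Eulerian polynomial A_{n,r}(t), which has degree n−r, has only real, distinct, and nonpositive roots: it factors over ℝ as a positive constant times a product of n−r distinct linear factors (t − x_i) with all x_i ≤ 0. -/

import Mathlib

/-
Inserting a new first value into a permutation (`Equiv.Perm.decomposeFin`) gives the recurrence
`A_{n+1,r} = ((n+1-r) t + r) A_{n,r} + t (1-t) A'_{n,r}`, starting from `A_{r,r} = r!`.
If `A_{n,r} = c ∏ (t - x_i)` with `x_0 < ⋯ < x_{d-1} < 0`, the right-hand side equals
`x_i (1 - x_i) A'_{n,r}(x_i)` at `x_i`, whose signs alternate, equals `r A_{n,r}(0) > 0` at `0`,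
and has the sign of `(-1)^(d+1)` far to the left. The intermediate value theorem then gives
`d + 1` negative roots of `A_{n+1,r}`, which has degree `d + 1`.
-/

open Finset
open scoped Classical

/-- The `r`-Eulerian polynomial `A_{n,r}(t) = ∑_{π ∈ S_n} t^{exc_r(π)}`, where
`exc_r(π)` is the number of indices `i` with `π(i) ≥ i + r` (1-indexed, which
in the 0-indexed encoding reads `(π i : ℕ) ≥ (i : ℕ) + r`). -/
noncomputable def rEulerianPoly (n r : ℕ) : Polynomial ℝ :=
  ∑ π : Equiv.Perm (Fin n),
    Polynomial.X ^ (univ.filter fun i : Fin n => (i : ℕ) + r ≤ (π i : ℕ)).card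

open Polynomial

lemma Fin.strictMono_snoc {α : Type*} [Preorder α] {n : ℕ} {f : Fin n → α} {a : α} :
    StrictMono (Fin.snoc f a : Fin (n + 1) → α) ↔ StrictMono f ∧ ∀ j, f j < a := by
  refine ⟨fun h => ⟨fun i j hij => ?_, fun j => ?_⟩, fun ⟨hf, ha⟩ i j hij => ?_⟩
  · simpa using h (Fin.castSucc_lt_castSucc_iff.2 hij)
  · simpa using h (Fin.castSucc_lt_last j)
  · induction j using Fin.lastCases with
    | last =>
      obtain ⟨i, rfl⟩ := Fin.exists_castSucc_eq.2 (Fin.ne_last_of_lt hij)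
      simpa using ha i
    | cast j =>
      obtain ⟨i, rfl⟩ :=
        Fin.exists_castSucc_eq.2 (Fin.ne_last_of_lt (hij.trans (Fin.castSucc_lt_last j)))
      simpa using hf (Fin.castSucc_lt_castSucc_iff.1 hij)

lemma neg_one_pow_card_filter_neg_mul_prod_pos {ι R : Type*} [CommRing R] [LinearOrder R]
    [IsStrictOrderedRing R] {s : Finset ι} {f : ι → R} (hf : ∀ i ∈ s, f i ≠ 0) :
    0 < (-1) ^ #{i ∈ s | f i < 0} * ∏ i ∈ s, f i := by
  rw [← prod_filter_mul_prod_filter_not s (fun i => f i < 0), ← mul_assoc, ← prod_neg]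
  refine mul_pos (prod_pos fun i hi => ?_) (prod_pos fun i hi => ?_)
  · exact neg_pos.2 (mem_filter.1 hi).2
  · have := mem_filter.1 hi
    exact lt_of_le_of_ne (not_lt.1 this.2) (hf i this.1).symm

lemma Lagrange.neg_one_pow_mul_eval_derivative_nodal_pos {d : ℕ} {x : Fin d → ℝ}
    (hx : StrictMono x) (i : Fin d) :
    0 < (-1) ^ (d - 1 - i) * (derivative (Lagrange.nodal univ x)).eval (x i) := by
  have hfilter : {k ∈ univ.erase i | x i - x k < 0} = Ioi i := by
    ext k
    simp only [mem_filter, mem_erase, mem_univ, mem_Ioi, sub_neg, hx.lt_iff_lt, and_true]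
    exact ⟨fun h => h.2, fun h => ⟨h.ne', h⟩⟩
  rw [Lagrange.eval_nodal_derivative_eval_node_eq (mem_univ i), Lagrange.eval_nodal,
    ← Fin.card_Ioi, ← hfilter]
  exact neg_one_pow_card_filter_neg_mul_prod_pos fun k hk =>
    sub_ne_zero.2 (hx.injective.ne (mem_erase.1 hk).1.symm)

lemma Polynomial.exists_lt_neg_one_pow_natDegree_mul_eval_pos {P : ℝ[X]} (hP : 0 < P.leadingCoeff)
    (a : ℝ) : ∃ t < a, 0 < (-1) ^ P.natDegree * P.eval t := by
  have hequiv := (Asymptotics.IsEquivalent.refl (u := fun _ : ℝ => (-1 : ℝ) ^ P.natDegree)).mul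
    P.isEquivalent_atBot_lead
  have hlead : ∀ᶠ t in Filter.atBot,
      0 < (-1 : ℝ) ^ P.natDegree * (P.leadingCoeff * t ^ P.natDegree) :=
    (Filter.eventually_lt_atBot 0).mono fun t ht => by
      rw [mul_left_comm, ← mul_pow]; exact mul_pos hP (pow_pos (by linarith) _)
  obtain ⟨t, ht, hpos⟩ :=
    ((Filter.eventually_lt_atBot a).and (hequiv.eventually_pos hlead)).exists
  exact ⟨t, ht, hpos⟩

lemma exists_strictMono_roots_of_alternating {f : ℝ → ℝ} (hf : Continuous f) {m : ℕ}
    {w : Fin (m + 1) → ℝ} (hw : StrictMono w)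
    (hsign : ∀ j : Fin (m + 1), 0 < (-1) ^ (m - j) * f (w j)) :
    ∃ y : Fin m → ℝ, StrictMono y ∧ (∀ j, w j.castSucc < y j ∧ y j < w j.succ) ∧
      ∀ j, f (y j) = 0 := by
  have hroot : ∀ j : Fin m, ∃ y ∈ Set.Ioo (w j.castSucc) (w j.succ), f y = 0 := by
    intro j
    have hlt := hw (Fin.castSucc_lt_succ (i := j))
    have h₁ := hsign j.castSucc
    have h₂ := hsign j.succ
    rw [Fin.val_castSucc, show m - j = m - (j + 1) + 1 by omega, pow_succ] at h₁
    rw [Fin.val_succ] at h₂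
    have hsq : (-1 : ℝ) ^ (m - (j + 1)) * (-1) ^ (m - (j + 1)) = 1 := by
      rw [← mul_pow]; norm_num
    have hneg : f (w j.castSucc) * f (w j.succ) < 0 := by nlinarith [mul_pos h₁ h₂]
    rcases mul_neg_iff.1 hneg with ⟨ha, hb⟩ | ⟨ha, hb⟩
    · exact intermediate_value_Ioo' hlt.le hf.continuousOn ⟨hb, ha⟩
    · exact intermediate_value_Ioo hlt.le hf.continuousOn ⟨ha, hb⟩
  choose y hy hfy using hroot
  refine ⟨y, fun i j hij => ?_, fun j => hy j, hfy⟩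
  calc y i < w i.succ := (hy i).2
    _ ≤ w j.castSucc := hw.monotone (Fin.succ_le_castSucc_iff.2 hij)
    _ < y j := (hy j).1

lemma Polynomial.eq_C_leadingCoeff_mul_prod_X_sub_C {K : Type*} [Field K] {m : ℕ} {Q : K[X]}
    (hQ : Q.natDegree = m) {y : Fin m → K} (hy : Function.Injective y)
    (hroot : ∀ i, Q.IsRoot (y i)) :
    Q = C Q.leadingCoeff * ∏ i, (X - C (y i)) := by
  have hmonic : (∏ i, (X - C (y i))).Monic := monic_prod_of_monic _ _ fun i _ => monic_X_sub_C _
  obtain ⟨U, rfl⟩ := Fintype.prod_dvd_of_coprime (pairwise_coprime_X_sub_C hy)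
    fun i => dvd_iff_isRoot.2 (hroot i)
  rcases eq_or_ne U 0 with rfl | hU
  · simp
  have hU0 : U.natDegree = 0 := by
    rw [natDegree_mul hmonic.ne_zero hU, natDegree_prod_of_monic _ _ fun i _ => monic_X_sub_C _]
      at hQ
    simpa using hQ
  rw [leadingCoeff_mul, hmonic.leadingCoeff, one_mul, mul_comm, leadingCoeff, hU0,
    ← eq_C_of_natDegree_eq_zero hU0]

section EulerianOp

variable {R : Type*} [CommRing R]

noncomputable def eulerianOp (a b : R) : R[X] →ₗ[R] R[X] :=
  LinearMap.mulLeft R (C a * X + C b) + LinearMap.mulLeft R (X * (1 - X)) ∘ₗ derivative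

lemma eulerianOp_apply (a b : R) (P : R[X]) :
    eulerianOp a b P = (C a * X + C b) * P + X * (1 - X) * derivative P := rfl

lemma coeff_X_mul_derivative (P : R[X]) (m : ℕ) : (X * derivative P).coeff m = m * P.coeff m := by
  cases m with
  | zero => simp
  | succ m => rw [coeff_X_mul, coeff_derivative, mul_comm]; push_cast; rfl

lemma coeff_eulerianOp_succ (a b : R) (P : R[X]) (m : ℕ) :
    (eulerianOp a b P).coeff (m + 1) = (a - m) * P.coeff m + (b + (m + 1)) * P.coeff (m + 1) := by
  have h : eulerianOp a b P =
      C a * (X * P) + C b * P + X * derivative P - X * (X * derivative P) := by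
    rw [eulerianOp_apply]; ring
  rw [h, coeff_sub, coeff_add, coeff_add, coeff_C_mul, coeff_C_mul,
    coeff_X_mul_derivative, coeff_X_mul, coeff_X_mul, coeff_X_mul_derivative]
  push_cast; ring

lemma X_mul_derivative_X_pow (k : ℕ) : X * derivative (X ^ k : R[X]) = (k : R[X]) * X ^ k := by
  cases k with
  | zero => simp
  | succ k => rw [derivative_X_pow, ← C_eq_natCast, Nat.add_sub_cancel]; ring

variable {a b : R} {P : R[X]} {d : ℕ}

lemma coeff_eulerianOp_of_natDegree_le (hP : P.natDegree ≤ d) :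
    (eulerianOp a b P).coeff (d + 1) = (a - d) * P.coeff d := by
  rw [coeff_eulerianOp_succ, coeff_eq_zero_of_natDegree_lt (show P.natDegree < d + 1 by omega),
    mul_zero, add_zero]

lemma natDegree_eulerianOp_le (hP : P.natDegree ≤ d) :
    (eulerianOp a b P).natDegree ≤ d + 1 := by
  refine natDegree_le_iff_coeff_eq_zero.2 fun m hm => ?_
  obtain ⟨m, rfl⟩ : ∃ k, m = k + 1 := ⟨m - 1, by omega⟩
  rw [coeff_eulerianOp_succ, coeff_eq_zero_of_natDegree_lt (by omega),
    coeff_eq_zero_of_natDegree_lt (by omega), mul_zero, mul_zero, add_zero]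

end EulerianOp

def HasDistinctNegRoots (d : ℕ) (P : ℝ[X]) : Prop :=
  ∃ (x : Fin d → ℝ) (c : ℝ), StrictMono x ∧ (∀ i, x i < 0) ∧ 0 < c ∧
    P = C c * ∏ i, (X - C (x i))

open Lagrange in
theorem HasDistinctNegRoots.map_eulerianOp {d : ℕ} {P : ℝ[X]} (hP : HasDistinctNegRoots d P)
    {a b : ℝ} (ha : d < a) (hb : 0 < b) : HasDistinctNegRoots (d + 1) (eulerianOp a b P) := by
  obtain ⟨x, c, hx, hneg, hc, rfl⟩ := hP
  change HasDistinctNegRoots (d + 1) (eulerianOp a b (C c * nodal univ x))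
  set Q := eulerianOp a b (C c * nodal univ x)
  have hPdeg : (C c * nodal univ x).natDegree = d := by
    rw [natDegree_C_mul hc.ne', natDegree_nodal, card_univ, Fintype.card_fin]
  have hQcoeff : Q.coeff (d + 1) = (a - d) * c := by
    have hmonic : (nodal univ x).coeff d = 1 := by
      simpa [natDegree_nodal] using (nodal_monic (s := univ) (v := x)).coeff_natDegree
    rw [coeff_eulerianOp_of_natDegree_le hPdeg.le, coeff_C_mul, hmonic, mul_one]
  have hQdeg : Q.natDegree = d + 1 :=
    natDegree_eq_of_le_of_coeff_ne_zero (natDegree_eulerianOp_le hPdeg.le)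
      (by rw [hQcoeff]; exact mul_ne_zero (sub_pos.2 ha).ne' hc.ne')
  have hQlc : 0 < Q.leadingCoeff := by
    rw [leadingCoeff, hQdeg, hQcoeff]; exact mul_pos (sub_pos.2 ha) hc
  have hQx : ∀ i : Fin d, 0 < (-1) ^ (d - i) * Q.eval (x i) := by
    intro i
    have hD := neg_one_pow_mul_eval_derivative_nodal_pos hx i
    have hxi : 0 < -(x i * (1 - x i)) := by nlinarith [hneg i]
    have heval : (-1) ^ (d - i) * Q.eval (x i) =
        -(x i * (1 - x i)) * c * ((-1) ^ (d - 1 - i) * (derivative (nodal univ x)).eval (x i)) := by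
      rw [show d - i = d - 1 - i + 1 by omega, pow_succ]
      simp only [Q, eulerianOp_apply, eval_add, eval_mul, eval_C, eval_X, eval_sub, eval_one,
        derivative_C_mul, eval_nodal_at_node (mem_univ i)]
      ring
    rw [heval]
    exact mul_pos (mul_pos hxi hc) hD
  have hQ0 : 0 < Q.eval 0 := by
    simp only [Q, eulerianOp_apply, eval_add, eval_mul, eval_C, eval_X, eval_sub, eval_one,
      eval_nodal, mul_zero, zero_add, zero_mul, add_zero]
    exact mul_pos hb (mul_pos hc (prod_pos fun k _ => by linarith [hneg k]))
  have hsnoc : StrictMono (Fin.snoc x 0 : Fin (d + 1) → ℝ) :=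
    Fin.strictMono_snoc.2 ⟨hx, hneg⟩
  obtain ⟨t, ht, hQt⟩ := exists_lt_neg_one_pow_natDegree_mul_eval_pos hQlc
    ((Fin.snoc x 0 : Fin (d + 1) → ℝ) 0)
  set w : Fin (d + 2) → ℝ := Fin.cons t (Fin.snoc x 0)
  have hw : StrictMono w :=
    Fin.strictMono_cons.2 ⟨fun j => ht.trans_le (hsnoc.monotone (Fin.zero_le j)), hsnoc⟩
  have hsign : ∀ j : Fin (d + 2), 0 < (-1) ^ (d + 1 - j) * Q.eval (w j) := by
    refine Fin.cases (by simpa [w, hQdeg] using hQt) (Fin.lastCases ?_ fun i => ?_)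
    · simpa [w] using hQ0
    · simpa [w] using hQx i
  obtain ⟨y, hy, hyw, hroot⟩ := exists_strictMono_roots_of_alternating Q.continuous hw hsign
  refine ⟨y, Q.leadingCoeff, hy, fun j => ?_, hQlc,
    eq_C_leadingCoeff_mul_prod_X_sub_C hQdeg hy.injective hroot⟩
  calc y j < w j.succ := (hyw j).2
    _ ≤ w (Fin.last _) := hw.monotone (Fin.le_last _)
    _ = 0 := by simp [w]

namespace Equiv.Perm

variable {n r : ℕ}

def rExc (r : ℕ) (π : Perm (Fin n)) : ℕ := #{i : Fin n | (i : ℕ) + r ≤ π i}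

lemma rExc_eq_sum (π : Perm (Fin n)) :
    π.rExc r = ∑ i : Fin n, if (i : ℕ) + r ≤ π i then 1 else 0 :=
  card_filter _ _

lemma rExc_eq_zero_of_le (h : n ≤ r) (π : Perm (Fin n)) : π.rExc r = 0 := by
  simp only [rExc, card_eq_zero, filter_eq_empty_iff]
  intro i _
  have := (π i).isLt
  omega

lemma rExc_decomposeFin_symm_zero (hr : 1 ≤ r) (σ : Perm (Fin n)) :
    (decomposeFin.symm (0, σ)).rExc r = σ.rExc r := by
  simp only [rExc_eq_sum, Fin.sum_univ_succ, decomposeFin_symm_apply_zero,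
    decomposeFin_symm_apply_succ, swap_self, refl_apply, Fin.val_succ, Fin.val_zero]
  simp only [add_right_comm _ 1 r, add_le_add_iff_right]
  rw [if_neg (by omega), zero_add]

-- Position `0` gets the value `σ j + 1` and position `j + 1` the value `0`, the others keep their
-- shifted values: the excedance at `j` (if any) is lost, and one at `0` appears iff `r ≤ σ j + 1`.
lemma rExc_decomposeFin_symm_succ (σ : Perm (Fin n)) (j : Fin n) :
    (decomposeFin.symm ((σ j).succ, σ)).rExc r + (if (j : ℕ) + r ≤ σ j then 1 else 0) =
      σ.rExc r + if r ≤ (σ j : ℕ) + 1 then 1 else 0 := by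
  have hterm : ∀ i : Fin n,
      (if (i.succ : ℕ) + r ≤ (swap 0 (σ j).succ (σ i).succ : Fin (n + 1)) then 1 else 0) +
        (if i = j then if (j : ℕ) + r ≤ σ j then 1 else 0 else 0) =
      if (i : ℕ) + r ≤ σ i then 1 else 0 := by
    intro i
    rcases eq_or_ne i j with rfl | hij
    · simp
    · rw [swap_apply_of_ne_of_ne (Fin.succ_ne_zero _) (by simpa using hij)]
      simp [hij, add_right_comm _ 1 r]
  simp only [rExc_eq_sum, Fin.sum_univ_succ, decomposeFin_symm_apply_zero,
    decomposeFin_symm_apply_succ]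
  rw [← sum_congr rfl fun i _ => hterm i, sum_add_distrib, sum_ite_eq' univ j,
    if_pos (mem_univ _)]
  simp only [Fin.val_zero, zero_add, Fin.val_succ]
  ring

lemma card_filter_le_apply_add_one (hr : 1 ≤ r) (hrn : r ≤ n + 1) (σ : Perm (Fin n)) :
    #{j : Fin n | r ≤ (σ j : ℕ) + 1} = n + 1 - r := by
  have hσ : #{j : Fin n | r ≤ (σ j : ℕ) + 1} = #{v : Fin n | r ≤ (v : ℕ) + 1} := by
    simp only [card_filter]
    exact Equiv.sum_comp σ fun v : Fin n => if r ≤ (v : ℕ) + 1 then 1 else 0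
  have hsplit := card_filter_add_card_filter_not (s := univ) fun v : Fin n => (v : ℕ) < r - 1
  rw [Fin.card_filter_val_lt, card_univ, Fintype.card_fin] at hsplit
  have hcompl : #{v : Fin n | r ≤ (v : ℕ) + 1} = #{v : Fin n | ¬ (v : ℕ) < r - 1} := by
    congr 1; exact filter_congr fun v _ => by omega
  omega

lemma sum_X_pow_rExc_decomposeFin_symm (hr : 1 ≤ r) (hrn : r ≤ n + 1) (σ : Perm (Fin n)) :
    ∑ p, (X : ℝ[X]) ^ (decomposeFin.symm (p, σ)).rExc r =
      eulerianOp ((n : ℝ) + 1 - r) r (X ^ σ.rExc r) := by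
  set k := σ.rExc r
  have hexp : ∀ j : Fin n, (X : ℝ[X]) ^ (decomposeFin.symm ((σ j).succ, σ)).rExc r =
      if r ≤ (σ j : ℕ) + 1 ∧ ¬ (j : ℕ) + r ≤ σ j then X ^ (k + 1) else X ^ k := by
    intro j
    have := rExc_decomposeFin_symm_succ (r := r) σ j
    split_ifs at this ⊢ <;> first | omega | congr 1 <;> omega
  have hcount : (#{j : Fin n | r ≤ (σ j : ℕ) + 1 ∧ ¬ (j : ℕ) + r ≤ σ j} : ℝ[X]) + k =
      n + 1 - r := by
    have hsub : ({j : Fin n | (j : ℕ) + r ≤ σ j} : Finset _) ⊆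
        ({j : Fin n | r ≤ (σ j : ℕ) + 1} : Finset _) :=
      fun j hj => by simp only [mem_filter, mem_univ, true_and] at hj ⊢; omega
    have h := card_sdiff_add_card_eq_card hsub
    rw [← filter_and_not, card_filter_le_apply_add_one hr hrn σ] at h
    rw [eq_sub_iff_add_eq]
    exact_mod_cast (show _ + k + r = n + 1 by unfold k rExc; omega)
  have hsplit := card_filter_add_card_filter_not (s := univ)
    fun j : Fin n => r ≤ (σ j : ℕ) + 1 ∧ ¬ (j : ℕ) + r ≤ σ j
  rw [card_univ, Fintype.card_fin] at hsplit
  rw [Fin.sum_univ_succ, rExc_decomposeFin_symm_zero hr,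
    ← Equiv.sum_comp σ fun v => (X : ℝ[X]) ^ (decomposeFin.symm (v.succ, σ)).rExc r,
    sum_congr rfl fun j _ => hexp j, sum_ite, sum_const, sum_const, nsmul_eq_mul, nsmul_eq_mul,
    eulerianOp_apply]
  have hsplit' : (#{j : Fin n | r ≤ (σ j : ℕ) + 1 ∧ ¬ (j : ℕ) + r ≤ σ j} : ℝ[X]) +
      #{j : Fin n | ¬ (r ≤ (σ j : ℕ) + 1 ∧ ¬ (j : ℕ) + r ≤ σ j)} = n := by
    exact_mod_cast hsplit
  rw [show (X : ℝ[X]) * (1 - X) * derivative (X ^ k) = (1 - X) * (X * derivative (X ^ k)) by ring,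
    X_mul_derivative_X_pow, map_sub, map_add, map_one, map_natCast, map_natCast, pow_succ]
  linear_combination X ^ k * hsplit' + X ^ k * (X - 1) * hcount

end Equiv.Perm

lemma rEulerianPoly_eq_sum_X_pow_rExc (n r : ℕ) :
    rEulerianPoly n r = ∑ π : Equiv.Perm (Fin n), X ^ π.rExc r := rfl

lemma rEulerianPoly_of_le {n r : ℕ} (h : n ≤ r) : rEulerianPoly n r = n.factorial := by
  simp [rEulerianPoly_eq_sum_X_pow_rExc, Equiv.Perm.rExc_eq_zero_of_le h, Fintype.card_perm]

theorem rEulerianPoly_succ {n r : ℕ} (hr : 1 ≤ r) (hrn : r ≤ n + 1) :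
    rEulerianPoly (n + 1) r = eulerianOp ((n : ℝ) + 1 - r) r (rEulerianPoly n r) := by
  rw [rEulerianPoly_eq_sum_X_pow_rExc, rEulerianPoly_eq_sum_X_pow_rExc, map_sum,
    ← Equiv.sum_comp Equiv.Perm.decomposeFin.symm, Fintype.sum_prod_type, sum_comm]
  exact sum_congr rfl fun σ _ => σ.sum_X_pow_rExc_decomposeFin_symm hr hrn

theorem hasDistinctNegRoots_rEulerianPoly {r : ℕ} (hr : 1 ≤ r) (m : ℕ) :
    HasDistinctNegRoots m (rEulerianPoly (r + m) r) := by
  induction m with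
  | zero =>
    rw [add_zero, rEulerianPoly_of_le le_rfl]
    exact ⟨Fin.elim0, r.factorial, fun i => i.elim0, fun i => i.elim0, by positivity, by simp⟩
  | succ m ih =>
    rw [← add_assoc, rEulerianPoly_succ hr (by omega)]
    exact ih.map_eulerianOp (by push_cast; linarith) (by exact_mod_cast hr)

/-- For `1 ≤ r ≤ n`, the `r`-Eulerian polynomial has only real, distinct,
nonpositive roots: it is a positive constant times a product of `n - r`
distinct linear factors `(t - x_i)` with all `x_i ≤ 0`. -/
theorem rEulerianPoly_real_roots (n r : ℕ) (hr : 1 ≤ r) (hrn : r ≤ n) :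
    ∃ (x : Fin (n - r) → ℝ) (c : ℝ), StrictMono x ∧ (∀ i, x i ≤ 0) ∧ 0 < c ∧
      rEulerianPoly n r
        = Polynomial.C c * ∏ i : Fin (n - r), (Polynomial.X - Polynomial.C (x i)) := by
  obtain ⟨x, c, hx, hneg, hc, hP⟩ := hasDistinctNegRoots_rEulerianPoly hr (n - r)
  rw [Nat.add_sub_cancel' hrn] at hP
  exact ⟨x, c, hx, fun i => (hneg i).le, hc, hP⟩
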